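/- arXiv:2007.01858 — 6 statements merged into one kernel-verified Lean document; each statement's English description precedes it below -/
import Mathlib

section
/- For every continuous linear functional φ ∈ B* there exists a unique function g : Ω' → E such that φ(Ψ(conj(λ))e) = ⟨e, g(λ)⟩ for all e ∈ E and λ ∈ Ω', and this function g is holomorphic on Ω'. Moreover, if the linear span of {Ψ(conj(λ))e : e ∈ E, λ ∈ Ω'} is dense in B, then the assignment φ ↦ g is injective, i.e. g = 0 implies φ = 0. -/
/-! By the Riesz representation theorem, `φ ∘ Ψ(conj λ)` is represented by a unique
vector `g λ = R (φ ∘ Ψ(conj λ))`, where `R` is the inverse of the conjugate-linear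
isometry `E ≃ E*`. Composing a holomorphic function with conjugation on both sides
(in the argument and through the conjugate-linear `R`) gives a holomorphic function
again. If `g` vanishes, `φ` vanishes on a set with dense span, hence everywhere. -/

open ComplexConjugate Filter Topology

section ConjugateComposition

variable {F G : Type*} [NormedAddCommGroup F] [NormedSpace ℂ F]
  [NormedAddCommGroup G] [NormedSpace ℂ G]

theorem HasDerivWithinAt.semilinear_comp_conj {f : ℂ → F} {f' : F} {s : Set ℂ} {z : ℂ}
    (R : F →SL[starRingEnd ℂ] G) (hf : HasDerivWithinAt f f' (conj '' s) (conj z)) :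
    HasDerivWithinAt (fun w => R (f (conj w))) (R f') s z := by
  rw [hasDerivWithinAt_iff_isLittleO] at hf ⊢
  have hconj : Tendsto conj (𝓝[s] z) (𝓝[conj '' s] (conj z)) :=
    Complex.continuous_conj.continuousWithinAt.tendsto_nhdsWithin_image
  refine (((R.isBigO_comp _ _).trans_isLittleO
    (hf.comp_tendsto hconj)).norm_right.congr' ?_ ?_).of_norm_right
  · refine Eventually.of_forall fun w => ?_
    simp [map_sub, map_smulₛₗ]
  · exact Eventually.of_forall fun w => by
      simp only [Function.comp_apply, ← map_sub, RCLike.norm_conj]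

theorem DifferentiableOn.semilinear_comp_conj {f : ℂ → F} {s : Set ℂ}
    (R : F →SL[starRingEnd ℂ] G) (hf : DifferentiableOn ℂ f (conj '' s)) :
    DifferentiableOn ℂ (fun w => R (f (conj w))) s := fun z hz =>
  ((hf (conj z) ⟨z, hz, rfl⟩).hasDerivWithinAt.semilinear_comp_conj R).differentiableWithinAt

end ConjugateComposition

theorem stmt_0_general {E : Type*} [NormedAddCommGroup E] [InnerProductSpace ℂ E] [CompleteSpace E]
    {B : Type*} [NormedAddCommGroup B] [NormedSpace ℂ B]
    (Ω' : Set ℂ)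
    (Ψ : ℂ → (E →L[ℂ] B))
    (hΨ : DifferentiableOn ℂ Ψ ((starRingEnd ℂ) '' Ω'))
    (φ : B →L[ℂ] ℂ) :
    ∃ g : ℂ → E,
      (∀ (e : E), ∀ lam ∈ Ω', φ (Ψ (starRingEnd ℂ lam) e) = (inner ℂ (g lam) e : ℂ)) ∧
      DifferentiableOn ℂ g Ω' ∧
      (∀ g' : ℂ → E,
        (∀ (e : E), ∀ lam ∈ Ω', φ (Ψ (starRingEnd ℂ lam) e) = (inner ℂ (g' lam) e : ℂ)) →
        Set.EqOn g' g Ω') ∧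
      ((Dense (↑(Submodule.span ℂ
            {b : B | ∃ (e : E), ∃ lam ∈ Ω', b = Ψ (starRingEnd ℂ lam) e}) : Set B)) →
        Set.EqOn g 0 Ω' → φ = 0) := by
  set R : StrongDual ℂ E →SL[starRingEnd ℂ] E :=
    ((InnerProductSpace.toDual ℂ E).symm : StrongDual ℂ E →SL[starRingEnd ℂ] E)
  set g : ℂ → E := fun lam => R (φ ∘L Ψ (conj lam))
  have hg : ∀ e lam, φ (Ψ (conj lam) e) = inner ℂ (g lam) e := fun e lam => by
    simp [g, R, InnerProductSpace.toDual_symm_apply]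
  refine ⟨g, fun e lam _ => hg e lam, ?_, ?_, ?_⟩
  · exact ((differentiableOn_const φ).clm_comp hΨ).semilinear_comp_conj R
  · intro g' hg' lam hlam
    exact ext_inner_right ℂ fun e => by rw [← hg' e lam hlam, hg]
  · intro hdense hzero
    refine ContinuousLinearMap.ext_on hdense ?_
    rintro _ ⟨e, lam, hlam, rfl⟩
    simp [hg, hzero hlam]

theorem stmt_0 {E : Type*} [NormedAddCommGroup E] [InnerProductSpace ℂ E] [CompleteSpace E]
    {B : Type*} [NormedAddCommGroup B] [NormedSpace ℂ B] [CompleteSpace B]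
    (Ω' : Set ℂ) (hΩ' : IsOpen Ω') (hΩ'ne : Ω'.Nonempty)
    (Ψ : ℂ → (E →L[ℂ] B))
    (hΨ : DifferentiableOn ℂ Ψ ((starRingEnd ℂ) '' Ω'))
    (φ : B →L[ℂ] ℂ) :
    ∃ g : ℂ → E,
      (∀ (e : E), ∀ lam ∈ Ω', φ (Ψ (starRingEnd ℂ lam) e) = (inner ℂ (g lam) e : ℂ)) ∧
      DifferentiableOn ℂ g Ω' ∧
      (∀ g' : ℂ → E,
        (∀ (e : E), ∀ lam ∈ Ω', φ (Ψ (starRingEnd ℂ lam) e) = (inner ℂ (g' lam) e : ℂ)) →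
        Set.EqOn g' g Ω') ∧
      ((Dense (↑(Submodule.span ℂ
            {b : B | ∃ (e : E), ∃ lam ∈ Ω', b = Ψ (starRingEnd ℂ lam) e}) : Set B)) →
        Set.EqOn g 0 Ω' → φ = 0) :=
  stmt_0_general Ω' Ψ hΨ φ
end

section
/- Assume Mz ∈ B(B) acts as multiplication by the variable, i.e. (ι(Mz f))(z) = z·(ι f)(z) for all f ∈ B and z ∈ Ω. Then for all e ∈ E, z ∈ Ω and λ ∈ Ω': (U(Mz*φ_{z,e}))(λ) = conj(z)·(Uφ_{z,e})(λ), where Mz* ∈ B(B*) is the Banach-space adjoint of Mz; that is, the left inverse induced by Mz* on the Cauchy dual space satisfies condition (A3) with respect to the dual kernel function Ψ'(conj(z))e := Uφ_{z,e}. -/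
theorem inner_representer_smul {𝕜 : Type*} [RCLike 𝕜]
    {E : Type*} [NormedAddCommGroup E] [InnerProductSpace 𝕜 E]
    {B : Type*} [NormedAddCommGroup B] [NormedSpace 𝕜 B]
    (v : E → B) (u : (B →L[𝕜] 𝕜) → E) (hu : ∀ φ e, φ (v e) = inner 𝕜 (u φ) e)
    (c : 𝕜) (φ : B →L[𝕜] 𝕜) :
    u (c • φ) = (starRingEnd 𝕜) c • u φ := by
  refine ext_inner_right 𝕜 fun e => ?_
  rw [← hu, inner_smul_left, ← hu, RCLike.conj_conj, smul_apply, smul_eq_mul]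

theorem stmt_7_general {E : Type*} [NormedAddCommGroup E] [InnerProductSpace ℂ E]
    {B : Type*} [NormedAddCommGroup B] [NormedSpace ℂ B]
    (Ω Ω' : Set ℂ)
    (ι : B →ₗ[ℂ] (ℂ → E))
    (Ψ : ℂ → (E →L[ℂ] B))
    (Φ : ℂ → E → (B →L[ℂ] ℂ))
    (hΦ : ∀ z ∈ Ω, ∀ (e : E) (f : B), Φ z e f = (inner ℂ e (ι f z) : ℂ))
    (U : (B →L[ℂ] ℂ) → ℂ → E)
    (hU : ∀ (φ : B →L[ℂ] ℂ) (e : E), ∀ lam ∈ Ω',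
        φ (Ψ (starRingEnd ℂ lam) e) = (inner ℂ (U φ lam) e : ℂ))
    (Mz : B →L[ℂ] B)
    (hMz : ∀ (f : B), ∀ z ∈ Ω, ι (Mz f) z = z • ι f z) :
    ∀ (e : E), ∀ z ∈ Ω, ∀ lam ∈ Ω',
      U ((Φ z e).comp Mz) lam = (starRingEnd ℂ z) • U (Φ z e) lam := by
  intro e z hz lam hlam
  have comp_Mz_eq_smul : (Φ z e).comp Mz = z • Φ z e := by
    ext f
    simp only [ContinuousLinearMap.comp_apply, smul_apply, smul_eq_mul,
      hΦ z hz, hMz f z hz, inner_smul_right]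
  rw [comp_Mz_eq_smul]
  exact inner_representer_smul (fun e => Ψ (starRingEnd ℂ lam) e) (fun φ => U φ lam)
    (fun φ e => hU φ e lam hlam) z (Φ z e)

theorem stmt_7 {E : Type*} [NormedAddCommGroup E] [InnerProductSpace ℂ E] [CompleteSpace E]
    {B : Type*} [NormedAddCommGroup B] [NormedSpace ℂ B] [CompleteSpace B]
    (Ω Ω' : Set ℂ) (hΩ : IsOpen Ω) (hΩne : Ω.Nonempty)
    (hΩ' : IsOpen Ω') (hΩ'ne : Ω'.Nonempty)
    (ι : B →ₗ[ℂ] (ℂ → E))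
    (hinj : ∀ f : B, (∀ z ∈ Ω, ι f z = 0) → f = 0)
    (hhol : ∀ f : B, DifferentiableOn ℂ (ι f) Ω)
    (hA1 : ∀ K ⊆ Ω, IsCompact K → ∃ C > 0, ∀ (f : B), ∀ z ∈ K, ‖ι f z‖ ≤ C * ‖f‖)
    (Ψ : ℂ → (E →L[ℂ] B))
    (hΨ : DifferentiableOn ℂ Ψ ((starRingEnd ℂ) '' Ω'))
    (Φ : ℂ → E → (B →L[ℂ] ℂ))
    (hΦ : ∀ z ∈ Ω, ∀ (e : E) (f : B), Φ z e f = (inner ℂ e (ι f z) : ℂ))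
    (U : (B →L[ℂ] ℂ) → ℂ → E)
    (hU : ∀ (φ : B →L[ℂ] ℂ) (e : E), ∀ lam ∈ Ω',
        φ (Ψ (starRingEnd ℂ lam) e) = (inner ℂ (U φ lam) e : ℂ))
    (Mz : B →L[ℂ] B)
    (hMz : ∀ (f : B), ∀ z ∈ Ω, ι (Mz f) z = z • ι f z) :
    ∀ (e : E), ∀ z ∈ Ω, ∀ lam ∈ Ω',
      U ((Φ z e).comp Mz) lam = (starRingEnd ℂ z) • U (Φ z e) lam :=
  stmt_7_general Ω Ω' ι Ψ Φ hΦ U hU Mz hMz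
end

section
/- Let 0 ≤ a < b and suppose that for every x ∈ H and every λ ∈ A(a,b) the series F_x(λ) := Σ_{n≥1}(P_E Tⁿ x)λ^{-n} + Σ_{n≥0}(P_E T'*ⁿ x)λⁿ converges in E. Then for every compact set K ⊆ A(a,b) there exists a constant C_K > 0 such that ‖F_x(λ)‖_E ≤ C_K‖x‖ for all x ∈ H and all λ ∈ K. -/
open ContinuousLinearMap

/-- Orthogonal projection onto the closed subspace `E`, as an operator `H →L[ℂ] H`. -/
noncomputable def PE {H : Type*} [NormedAddCommGroup H] [InnerProductSpace ℂ H]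
    (E : Submodule ℂ H) [CompleteSpace E] : H →L[ℂ] H :=
  E.subtypeL.comp E.orthogonalProjectionOnto

/-- The open annulus A(a,b) = {z ∈ ℂ : a < |z| < b}. -/
def annulus (a b : ℝ) : Set ℂ := {z : ℂ | a < ‖z‖ ∧ ‖z‖ < b}

/-!
Both halves of `F_x(λ)` are power series with operator coefficients, in `λ⁻¹` and in `λ`.
Pick radii `a < m₁ < min_K |λ|` and `max_K |λ| < m₂ < b`. Convergence at `m₁` (resp. `m₂`)
for every `x` makes the terms bounded in `n` for every `x`, so by Banach–Steinhaus they are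
bounded by `C‖x‖` uniformly in `n`. On `K` each half is then dominated by a geometric series
of ratio `m₁ / min_K |λ|` (resp. `max_K |λ| / m₂`), both `< 1`.
-/

section PowerComparison

variable {𝕜 : Type*} [NormedDivisionRing 𝕜]

theorem norm_pow_le_norm_pow_mul_pow {μ lam : 𝕜} {q : ℝ} (h : ‖lam‖ ≤ q * ‖μ‖) (n : ℕ) :
    ‖lam ^ n‖ ≤ ‖μ ^ n‖ * q ^ n := by
  rw [norm_pow, norm_pow, ← mul_pow, mul_comm]
  exact pow_le_pow_left₀ (norm_nonneg _) h n

theorem norm_zpow_neg_succ_le {μ lam : 𝕜} {q : ℝ} (hμ : μ ≠ 0) (hq1 : q ≤ 1)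
    (h : ‖μ‖ ≤ q * ‖lam‖) (n : ℕ) :
    ‖lam ^ (-(n + 1 : ℤ))‖ ≤ ‖μ ^ (-(n + 1 : ℤ))‖ * q ^ n := by
  have hμ0 : 0 < ‖μ‖ := norm_pos_iff.2 hμ
  have hq : 0 < q := pos_of_mul_pos_left (hμ0.trans_le h) (norm_nonneg _)
  have hlam : 0 < ‖lam‖ := pos_of_mul_pos_right (hμ0.trans_le h) hq.le
  have key : ‖μ‖ ^ (n + 1) ≤ q ^ n * ‖lam‖ ^ (n + 1) :=
    calc ‖μ‖ ^ (n + 1) ≤ (q * ‖lam‖) ^ (n + 1) := pow_le_pow_left₀ hμ0.le h _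
      _ = q * (q ^ n * ‖lam‖ ^ (n + 1)) := by ring
      _ ≤ q ^ n * ‖lam‖ ^ (n + 1) := mul_le_of_le_one_left (by positivity) hq1
  simp only [zpow_neg, ← Nat.cast_succ, zpow_natCast, norm_inv, norm_pow]
  rw [inv_mul_eq_div, le_div_iff₀ (by positivity), ← div_eq_inv_mul,
    div_le_iff₀ (by positivity)]
  exact key

end PowerComparison

section UniformBoundedness

variable {𝕜 E F : Type*} [NontriviallyNormedField 𝕜] [NormedAddCommGroup E] [NormedSpace 𝕜 E]
  [CompleteSpace E] [NormedAddCommGroup F] [NormedSpace 𝕜 F]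

theorem exists_norm_apply_le_of_summable_apply {g : ℕ → E →L[𝕜] F}
    (hg : ∀ x, Summable fun n => g n x) : ∃ C, 0 ≤ C ∧ ∀ n x, ‖g n x‖ ≤ C * ‖x‖ := by
  have hbdd : ∀ x, ∃ C, ∀ n, ‖g n x‖ ≤ C := fun x => by
    obtain ⟨C, hC⟩ := (hg x).tendsto_atTop_zero.norm.bddAbove_range
    exact ⟨C, fun n => hC (Set.mem_range_self n)⟩
  obtain ⟨C, hC⟩ := banach_steinhaus hbdd
  exact ⟨max C 0, le_max_right _ _, fun n x =>
    ((g n).le_opNorm x).trans (by gcongr; exact (hC n).trans (le_max_left _ _))⟩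

theorem exists_norm_tsum_smul_le_of_summable (A : ℕ → E →L[𝕜] F) (w : ℕ → 𝕜)
    (hw : ∀ x, Summable fun n => w n • A n x) {q : ℝ} (hq0 : 0 ≤ q) (hq1 : q < 1) :
    ∃ C, 0 ≤ C ∧ ∀ x (c : ℕ → 𝕜), (∀ n, ‖c n‖ ≤ ‖w n‖ * q ^ n) →
      ‖∑' n, c n • A n x‖ ≤ C * ‖x‖ := by
  obtain ⟨C, hC0, hC⟩ := exists_norm_apply_le_of_summable_apply (g := fun n => w n • A n) hw
  refine ⟨C * (1 - q)⁻¹, by have := sub_pos.2 hq1; positivity, fun x c hc => ?_⟩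
  have hterm : ∀ n, ‖c n • A n x‖ ≤ C * ‖x‖ * q ^ n := fun n =>
    calc ‖c n • A n x‖ = ‖c n‖ * ‖A n x‖ := norm_smul _ _
      _ ≤ ‖w n‖ * q ^ n * ‖A n x‖ := by gcongr; exact hc n
      _ = ‖w n • A n x‖ * q ^ n := by rw [norm_smul]; ring
      _ ≤ C * ‖x‖ * q ^ n := by gcongr; exact hC n x
  calc ‖∑' n, c n • A n x‖ ≤ C * ‖x‖ * (1 - q)⁻¹ :=
        tsum_of_norm_bounded ((hasSum_geometric_of_lt_one hq0 hq1).mul_left _) hterm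
    _ = C * (1 - q)⁻¹ * ‖x‖ := by ring

theorem exists_norm_tsum_pow_smul_le (A : ℕ → E →L[𝕜] F) {μ : 𝕜}
    (hμ : ∀ x, Summable fun n => μ ^ n • A n x) {R : ℝ} (hR : 0 ≤ R) (hRμ : R < ‖μ‖) :
    ∃ C, 0 ≤ C ∧ ∀ x (lam : 𝕜), ‖lam‖ ≤ R → ‖∑' n, lam ^ n • A n x‖ ≤ C * ‖x‖ := by
  have hμ0 : 0 < ‖μ‖ := hR.trans_lt hRμ
  obtain ⟨C, hC0, hC⟩ := exists_norm_tsum_smul_le_of_summable A (fun n => μ ^ n) hμ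
    (div_nonneg hR hμ0.le) ((div_lt_one hμ0).2 hRμ)
  refine ⟨C, hC0, fun x lam hlam => hC x _ (norm_pow_le_norm_pow_mul_pow ?_)⟩
  rwa [div_mul_cancel₀ _ hμ0.ne']

theorem exists_norm_tsum_zpow_neg_succ_smul_le (A : ℕ → E →L[𝕜] F) {μ : 𝕜} (hμ0 : μ ≠ 0)
    (hμ : ∀ x, Summable fun n : ℕ => μ ^ (-(n + 1 : ℤ)) • A n x) {r : ℝ} (hμr : ‖μ‖ < r) :
    ∃ C, 0 ≤ C ∧ ∀ x (lam : 𝕜), r ≤ ‖lam‖ →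
      ‖∑' n : ℕ, lam ^ (-(n + 1 : ℤ)) • A n x‖ ≤ C * ‖x‖ := by
  have hr : 0 < r := (norm_nonneg μ).trans_lt hμr
  obtain ⟨C, hC0, hC⟩ := exists_norm_tsum_smul_le_of_summable A _ hμ
    (div_nonneg (norm_nonneg μ) hr.le) ((div_lt_one hr).2 hμr)
  refine ⟨C, hC0, fun x lam hlam =>
    hC x _ (norm_zpow_neg_succ_le hμ0 ((div_le_one hr).2 hμr.le) ?_)⟩
  rw [div_mul_eq_mul_div, le_div_iff₀ hr]
  exact mul_le_mul_of_nonneg_left hlam (norm_nonneg μ)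

end UniformBoundedness

theorem ofReal_mem_annulus {a b t : ℝ} (ht : 0 ≤ t) (hat : a < t) (htb : t < b) :
    (t : ℂ) ∈ annulus a b := by
  simpa only [annulus, Set.mem_ofPred_eq, Complex.norm_of_nonneg ht] using ⟨hat, htb⟩

theorem stmt_9_general {H : Type*} [NormedAddCommGroup H] [InnerProductSpace ℂ H] [CompleteSpace H]
    (T T' : H →L[ℂ] H)
    (E : Submodule ℂ H) [CompleteSpace E]
    (a b : ℝ) (ha : 0 ≤ a)
    (hconv : ∀ x : H, ∀ lam ∈ annulus a b,
      Summable (fun n : ℕ => (lam ^ (-(n + 1 : ℤ))) • PE E ((T ^ (n + 1)) x)) ∧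
      Summable (fun n : ℕ =>
        (lam ^ n) • PE E (((ContinuousLinearMap.adjoint T') ^ n) x))) :
    ∀ K ⊆ annulus a b, IsCompact K → ∃ C > 0, ∀ (x : H), ∀ lam ∈ K,
      ‖(∑' n : ℕ, (lam ^ (-(n + 1 : ℤ))) • PE E ((T ^ (n + 1)) x)) +
        ∑' n : ℕ, (lam ^ n) • PE E (((ContinuousLinearMap.adjoint T') ^ n) x)‖
        ≤ C * ‖x‖ := by
  intro K hK hKc
  rcases K.eq_empty_or_nonempty with rfl | hKne
  · exact ⟨1, one_pos, fun _ _ h => absurd h (Set.notMem_empty _)⟩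
  obtain ⟨z₁, hz₁, hmin⟩ := hKc.exists_isMinOn hKne continuous_norm.continuousOn
  obtain ⟨z₂, hz₂, hmax⟩ := hKc.exists_isMaxOn hKne continuous_norm.continuousOn
  obtain ⟨ha₁, h₁b⟩ := hK hz₁
  obtain ⟨ha₂, h₂b⟩ := hK hz₂
  obtain ⟨m₁, ham₁, hm₁⟩ := exists_between ha₁
  obtain ⟨m₂, hm₂, hm₂b⟩ := exists_between h₂b
  have hm₁0 : 0 < m₁ := ha.trans_lt ham₁
  have hm₂0 : 0 < m₂ := (norm_nonneg z₂).trans_lt hm₂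
  obtain ⟨C₁, hC₁0, hC₁⟩ := exists_norm_tsum_zpow_neg_succ_smul_le
    (fun n => PE E ∘L T ^ (n + 1)) (Complex.ofReal_ne_zero.2 hm₁0.ne')
    (fun x => (hconv x _ (ofReal_mem_annulus hm₁0.le ham₁ (hm₁.trans h₁b))).1)
    (by rwa [Complex.norm_of_nonneg hm₁0.le])
  obtain ⟨C₂, hC₂0, hC₂⟩ := exists_norm_tsum_pow_smul_le (fun n => PE E ∘L adjoint T' ^ n)
    (fun x => (hconv x _ (ofReal_mem_annulus hm₂0.le (ha₂.trans hm₂) hm₂b)).2)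
    (norm_nonneg z₂) (by rwa [Complex.norm_of_nonneg hm₂0.le])
  refine ⟨C₁ + C₂ + 1, by positivity, fun x lam hlam => ?_⟩
  calc _ ≤ C₁ * ‖x‖ + C₂ * ‖x‖ :=
        (norm_add_le _ _).trans (add_le_add (hC₁ x lam (hmin hlam)) (hC₂ x lam (hmax hlam)))
    _ ≤ (C₁ + C₂ + 1) * ‖x‖ := by nlinarith [norm_nonneg x]

theorem stmt_9 {H : Type*} [NormedAddCommGroup H] [InnerProductSpace ℂ H] [CompleteSpace H]
    (T T' W : H →L[ℂ] H)
    (hleft : ∃ S : H →L[ℂ] H, S.comp T = ContinuousLinearMap.id ℂ H)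
    (hW1 : W.comp ((ContinuousLinearMap.adjoint T).comp T) = ContinuousLinearMap.id ℂ H)
    (hW2 : ((ContinuousLinearMap.adjoint T).comp T).comp W = ContinuousLinearMap.id ℂ H)
    (hT' : T' = T.comp W)
    (E : Submodule ℂ H) [CompleteSpace E]
    (a b : ℝ) (ha : 0 ≤ a) (hab : a < b)
    (hconv : ∀ x : H, ∀ lam ∈ annulus a b,
      Summable (fun n : ℕ => (lam ^ (-(n + 1 : ℤ))) • PE E ((T ^ (n + 1)) x)) ∧
      Summable (fun n : ℕ =>
        (lam ^ n) • PE E (((ContinuousLinearMap.adjoint T') ^ n) x))) :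
    ∀ K ⊆ annulus a b, IsCompact K → ∃ C > 0, ∀ (x : H), ∀ lam ∈ K,
      ‖(∑' n : ℕ, (lam ^ (-(n + 1 : ℤ))) • PE E ((T ^ (n + 1)) x)) +
        ∑' n : ℕ, (lam ^ n) • PE E (((ContinuousLinearMap.adjoint T') ^ n) x)‖
        ≤ C * ‖x‖ :=
  stmt_9_general T T' E a b ha hconv
end

section
/- Let λ ∈ ℂ∖{0} and let e ∈ H be such that the series y := Σ_{n≥1} λ^{-n} T'*ⁿ e + Σ_{n≥0} λⁿ Tⁿ e converges in H. Then T'* y = λ y, i.e. y is an eigenvector (when nonzero) of the adjoint of the Cauchy dual operator with eigenvalue λ. -/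
open ContinuousLinearMap

/-! With K := T'*, the Cauchy dual identity K T = I makes K a backward shift on the series
Σ λⁿ Tⁿ e, so K maps it to K e + λ Σ λⁿ Tⁿ e, while K is a forward shift on Σ λ⁻ⁿ Kⁿ e, which it
maps to λ Σ λ⁻ⁿ Kⁿ e - K e. Adding, the two copies of K e cancel. -/

section ShiftedSeries

variable {R E : Type*} [Ring R] [AddCommGroup E] [Module R E] [TopologicalSpace E]
  [IsTopologicalAddGroup E] [T2Space E] [ContinuousConstSMul R E]
  {K : E →L[R] E} {f : ℕ → E} {s : E} {c : R}

theorem HasSum.apply_eq_add_smul_of_apply_succ_eq_smul (hf : HasSum f s)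
    (hK : ∀ n, K (f (n + 1)) = c • f n) : K s = K (f 0) + c • s := by
  have hKs : HasSum (fun n => K (f (n + 1))) (K s - K (f 0)) := by
    simpa using (hasSum_nat_add_iff' 1).mpr (K.hasSum hf)
  simp only [hK] at hKs
  rw [← sub_eq_iff_eq_add', hKs.unique (hf.const_smul c)]

theorem HasSum.apply_eq_smul_sub_of_apply_eq_smul_succ (hf : HasSum f s)
    (hK : ∀ n, K (f n) = c • f (n + 1)) : K s = c • (s - f 0) := by
  have hshift : HasSum (fun n => c • f (n + 1)) (c • (s - f 0)) := by
    simpa using ((hasSum_nat_add_iff' 1).mpr hf).const_smul c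
  simp only [← hK] at hshift
  exact (K.hasSum hf).unique hshift

end ShiftedSeries

theorem adjoint_comp_comp_self_eq_id {𝕜 E F : Type*} [RCLike 𝕜]
    [NormedAddCommGroup E] [InnerProductSpace 𝕜 E] [CompleteSpace E]
    [NormedAddCommGroup F] [InnerProductSpace 𝕜 F] [CompleteSpace F]
    (T : E →L[𝕜] F) (W : E →L[𝕜] E) (hW : ((adjoint T).comp T).comp W = .id 𝕜 E) :
    (adjoint (T.comp W)).comp T = .id 𝕜 E := by
  have h := congrArg adjoint hW
  rwa [adjoint_comp, adjoint_comp, adjoint_adjoint, adjoint_id, ← comp_assoc, ← adjoint_comp] at h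

theorem stmt_10_general {H : Type*} [NormedAddCommGroup H] [InnerProductSpace ℂ H] [CompleteSpace H]
    (T T' W : H →L[ℂ] H)
    (hW2 : ((ContinuousLinearMap.adjoint T).comp T).comp W = ContinuousLinearMap.id ℂ H)
    (hT' : T' = T.comp W)
    (lam : ℂ) (hlam : lam ≠ 0) (e : H)
    (h1 : Summable (fun n : ℕ =>
        (lam ^ (-(n + 1 : ℤ))) • ((ContinuousLinearMap.adjoint T') ^ (n + 1)) e))
    (h2 : Summable (fun n : ℕ => (lam ^ n) • (T ^ n) e))
    (y : H)
    (hy : y = (∑' n : ℕ,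
        (lam ^ (-(n + 1 : ℤ))) • ((ContinuousLinearMap.adjoint T') ^ (n + 1)) e) +
        ∑' n : ℕ, (lam ^ n) • (T ^ n) e) :
    (ContinuousLinearMap.adjoint T') y = lam • y := by
  have hKT : (adjoint T').comp T = .id ℂ H := hT' ▸ adjoint_comp_comp_self_eq_id T W hW2
  set K := adjoint T'
  have hK : ∀ n : ℕ, K (lam ^ (-(n + 1 : ℤ)) • (K ^ (n + 1)) e) =
      lam • lam ^ (-((n + 1 : ℕ) + 1 : ℤ)) • (K ^ (n + 1 + 1)) e := by
    intro n
    rw [map_smul, smul_smul, ← zpow_one_add₀ hlam, pow_succ' K (n + 1), mul_apply_eq_comp,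
      show (1 : ℤ) + -((n + 1 : ℕ) + 1) = -(n + 1) by push_cast; ring]
  have hT : ∀ n : ℕ, K (lam ^ (n + 1) • (T ^ (n + 1)) e) = lam • lam ^ n • (T ^ n) e := by
    intro n
    rw [map_smul, pow_succ' T n, mul_apply_eq_comp, ← comp_apply, hKT, id_apply, smul_smul, pow_succ']
  rw [hy, map_add, h1.hasSum.apply_eq_smul_sub_of_apply_eq_smul_succ hK,
    h2.hasSum.apply_eq_add_smul_of_apply_succ_eq_smul hT]
  have hK0 : lam • lam ^ (-((0 : ℕ) + 1 : ℤ)) • (K ^ (0 + 1)) e = K e := by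
    simp [smul_smul, hlam]
  rw [smul_sub, hK0, pow_zero, pow_zero, one_smul, one_apply_eq_self, smul_add]
  abel

theorem stmt_10 {H : Type*} [NormedAddCommGroup H] [InnerProductSpace ℂ H] [CompleteSpace H]
    (T T' W : H →L[ℂ] H)
    (hleft : ∃ S : H →L[ℂ] H, S.comp T = ContinuousLinearMap.id ℂ H)
    (hW1 : W.comp ((ContinuousLinearMap.adjoint T).comp T) = ContinuousLinearMap.id ℂ H)
    (hW2 : ((ContinuousLinearMap.adjoint T).comp T).comp W = ContinuousLinearMap.id ℂ H)
    (hT' : T' = T.comp W)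
    (lam : ℂ) (hlam : lam ≠ 0) (e : H)
    (h1 : Summable (fun n : ℕ =>
        (lam ^ (-(n + 1 : ℤ))) • ((ContinuousLinearMap.adjoint T') ^ (n + 1)) e))
    (h2 : Summable (fun n : ℕ => (lam ^ n) • (T ^ n) e))
    (y : H)
    (hy : y = (∑' n : ℕ,
        (lam ^ (-(n + 1 : ℤ))) • ((ContinuousLinearMap.adjoint T') ^ (n + 1)) e) +
        ∑' n : ℕ, (lam ^ n) • (T ^ n) e) :
    (ContinuousLinearMap.adjoint T') y = lam • y :=
  stmt_10_general T T' W hW2 hT' lam hlam e h1 h2 y hy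
end

section
/- Let λ ∈ ℂ∖{0} satisfy Σ_{n≥1}‖P_E T'ⁿ‖|λ|^{-n} + Σ_{n≥0}‖P_E T*ⁿ‖|λ|ⁿ < ∞. Then for every g ∈ H and every e ∈ E all the series below converge absolutely and ⟨Σ_{n≥1} conj(λ)^{-n} T'*ⁿ e + Σ_{n≥0} conj(λ)ⁿ Tⁿ e, g⟩ = ⟨e, Σ_{n≥1} (P_E T'ⁿ g)λ^{-n} + Σ_{n≥0} (P_E T*ⁿ g)λⁿ⟩. (This identifies the Cauchy dual of the analytic model space of T with the analytic model space of the Cauchy dual operator T'.) -/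
/-!
For `e ∈ E` the vector `A* e` equals `(P_E A)* e`, and `‖(P_E A)*‖ = ‖P_E A‖`; so all four series
are dominated termwise by the two summable hypotheses, and the identity is termwise adjointness
`⟨A* e, g⟩ = ⟨e, P_E A g⟩` carried through the absolutely convergent sums.
-/

open ContinuousLinearMap

open scoped InnerProductSpace ComplexConjugate

section WeightedSeries

variable {𝕜 E F : Type*} [RCLike 𝕜]

theorem summable_norm_smul_apply [NormedAddCommGroup E] [NormedSpace 𝕜 E]
    [NormedAddCommGroup F] [NormedSpace 𝕜 F] {A : ℕ → E →L[𝕜] F} {c : ℕ → 𝕜}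
    (hA : Summable fun n => ‖A n‖ * ‖c n‖) (x : E) :
    Summable fun n => ‖c n • A n x‖ := by
  refine (hA.mul_right ‖x‖).of_nonneg_of_le (fun n => norm_nonneg _) fun n => ?_
  calc ‖c n • A n x‖ = ‖c n‖ * ‖A n x‖ := norm_smul _ _
    _ ≤ ‖c n‖ * (‖A n‖ * ‖x‖) := by gcongr; exact (A n).le_opNorm x
    _ = ‖A n‖ * ‖c n‖ * ‖x‖ := by ring

variable [NormedAddCommGroup E] [InnerProductSpace 𝕜 E] [CompleteSpace E]
  [NormedAddCommGroup F] [InnerProductSpace 𝕜 F] [CompleteSpace F]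
  {A : ℕ → E →L[𝕜] F} {c : ℕ → 𝕜}

theorem summable_norm_smul_adjoint_apply (hA : Summable fun n => ‖A n‖ * ‖c n‖) (y : F) :
    Summable fun n => ‖conj (c n) • adjoint (A n) y‖ :=
  summable_norm_smul_apply (A := fun n => adjoint (A n)) (by simpa using hA) y

theorem inner_tsum_smul_adjoint_apply (hA : Summable fun n => ‖A n‖ * ‖c n‖) (x : E) (y : F) :
    ⟪x, ∑' n, conj (c n) • adjoint (A n) y⟫_𝕜 = ⟪∑' n, c n • A n x, y⟫_𝕜 := by
  rw [← inner_conj_symm (∑' n, c n • A n x), ← innerSL_apply_apply, ← innerSL_apply_apply,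
    (innerSL 𝕜 x).map_tsum (summable_norm_smul_adjoint_apply hA y).of_norm,
    (innerSL 𝕜 y).map_tsum (summable_norm_smul_apply hA x).of_norm, RCLike.conj_tsum]
  refine tsum_congr fun n => ?_
  simp [adjoint_inner_right]

end WeightedSeries

theorem ContinuousLinearMap.adjoint_pow {𝕜 E : Type*} [RCLike 𝕜] [NormedAddCommGroup E]
    [InnerProductSpace 𝕜 E] [CompleteSpace E] (A : E →L[𝕜] E) (n : ℕ) :
    adjoint (A ^ n) = adjoint A ^ n := by
  simp only [← star_eq_adjoint, star_pow]

theorem adjoint_PE_comp_apply_of_mem {H : Type*} [NormedAddCommGroup H] [InnerProductSpace ℂ H]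
    [CompleteSpace H] {E : Submodule ℂ H} [CompleteSpace E] (A : H →L[ℂ] H) {e : H} (he : e ∈ E) :
    adjoint ((PE E).comp A) e = adjoint A e := by
  have hPE : PE E = E.starProjection := rfl
  rw [adjoint_comp, comp_apply, hPE, isSelfAdjoint_iff'.mp (isSelfAdjoint_starProjection E)]
  exact congrArg _ (Submodule.starProjection_eq_self_iff.mpr he)

theorem stmt_12_general {H : Type*} [NormedAddCommGroup H] [InnerProductSpace ℂ H] [CompleteSpace H]
    (T T' : H →L[ℂ] H)
    (E : Submodule ℂ H) [CompleteSpace E]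
    (lam : ℂ)
    (h1 : Summable (fun n : ℕ => ‖(PE E).comp (T' ^ (n + 1))‖ * ‖lam‖⁻¹ ^ (n + 1)))
    (h2 : Summable (fun n : ℕ =>
        ‖(PE E).comp ((ContinuousLinearMap.adjoint T) ^ n)‖ * ‖lam‖ ^ n))
    (g : H) (e : H) (he : e ∈ E) :
    Summable (fun n : ℕ =>
      ‖((starRingEnd ℂ lam) ^ (-(n + 1 : ℤ))) •
        ((ContinuousLinearMap.adjoint T') ^ (n + 1)) e‖) ∧
    Summable (fun n : ℕ => ‖((starRingEnd ℂ lam) ^ n) • (T ^ n) e‖) ∧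
    Summable (fun n : ℕ => ‖(lam ^ (-(n + 1 : ℤ))) • PE E ((T' ^ (n + 1)) g)‖) ∧
    Summable (fun n : ℕ =>
      ‖(lam ^ n) • PE E (((ContinuousLinearMap.adjoint T) ^ n) g)‖) ∧
    (inner ℂ g
      ((∑' n : ℕ, ((starRingEnd ℂ lam) ^ (-(n + 1 : ℤ))) •
          ((ContinuousLinearMap.adjoint T') ^ (n + 1)) e) +
        ∑' n : ℕ, ((starRingEnd ℂ lam) ^ n) • (T ^ n) e) : ℂ) =
    (inner ℂ
      ((∑' n : ℕ, (lam ^ (-(n + 1 : ℤ))) • PE E ((T' ^ (n + 1)) g)) +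
        ∑' n : ℕ, (lam ^ n) • PE E (((ContinuousLinearMap.adjoint T) ^ n) g)) e : ℂ) := by
  have hA1 : Summable fun n : ℕ => ‖(PE E).comp (T' ^ (n + 1))‖ * ‖lam ^ (-(n + 1 : ℤ))‖ := by
    simpa only [zpow_neg, ← Nat.cast_succ, zpow_natCast, norm_inv, norm_pow, inv_pow] using h1
  have hA2 : Summable fun n : ℕ => ‖(PE E).comp (adjoint T ^ n)‖ * ‖lam ^ n‖ := by
    simpa only [norm_pow] using h2
  have hT'e (n : ℕ) : (adjoint T' ^ (n + 1)) e = adjoint ((PE E).comp (T' ^ (n + 1))) e := by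
    rw [adjoint_PE_comp_apply_of_mem _ he, adjoint_pow]
  have hTe (n : ℕ) : (T ^ n) e = adjoint ((PE E).comp (adjoint T ^ n)) e := by
    rw [adjoint_PE_comp_apply_of_mem _ he, adjoint_pow, adjoint_adjoint]
  simp only [hT'e, hTe, ← map_zpow₀, ← map_pow]
  refine ⟨summable_norm_smul_adjoint_apply hA1 e, summable_norm_smul_adjoint_apply hA2 e,
    summable_norm_smul_apply hA1 g, summable_norm_smul_apply hA2 g, ?_⟩
  rw [inner_add_right, inner_add_left, inner_tsum_smul_adjoint_apply hA1,
    inner_tsum_smul_adjoint_apply hA2]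
  rfl

theorem stmt_12 {H : Type*} [NormedAddCommGroup H] [InnerProductSpace ℂ H] [CompleteSpace H]
    (T T' W : H →L[ℂ] H)
    (hleft : ∃ S : H →L[ℂ] H, S.comp T = ContinuousLinearMap.id ℂ H)
    (hW1 : W.comp ((ContinuousLinearMap.adjoint T).comp T) = ContinuousLinearMap.id ℂ H)
    (hW2 : ((ContinuousLinearMap.adjoint T).comp T).comp W = ContinuousLinearMap.id ℂ H)
    (hT' : T' = T.comp W)
    (E : Submodule ℂ H) [CompleteSpace E]
    (lam : ℂ) (hlam : lam ≠ 0)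
    (h1 : Summable (fun n : ℕ => ‖(PE E).comp (T' ^ (n + 1))‖ * ‖lam‖⁻¹ ^ (n + 1)))
    (h2 : Summable (fun n : ℕ =>
        ‖(PE E).comp ((ContinuousLinearMap.adjoint T) ^ n)‖ * ‖lam‖ ^ n))
    (g : H) (e : H) (he : e ∈ E) :
    Summable (fun n : ℕ =>
      ‖((starRingEnd ℂ lam) ^ (-(n + 1 : ℤ))) •
        ((ContinuousLinearMap.adjoint T') ^ (n + 1)) e‖) ∧
    Summable (fun n : ℕ => ‖((starRingEnd ℂ lam) ^ n) • (T ^ n) e‖) ∧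
    Summable (fun n : ℕ => ‖(lam ^ (-(n + 1 : ℤ))) • PE E ((T' ^ (n + 1)) g)‖) ∧
    Summable (fun n : ℕ =>
      ‖(lam ^ n) • PE E (((ContinuousLinearMap.adjoint T) ^ n) g)‖) ∧
    (inner ℂ g
      ((∑' n : ℕ, ((starRingEnd ℂ lam) ^ (-(n + 1 : ℤ))) •
          ((ContinuousLinearMap.adjoint T') ^ (n + 1)) e) +
        ∑' n : ℕ, ((starRingEnd ℂ lam) ^ n) • (T ^ n) e) : ℂ) =
    (inner ℂ
      ((∑' n : ℕ, (lam ^ (-(n + 1 : ℤ))) • PE E ((T' ^ (n + 1)) g)) +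
        ∑' n : ℕ, (lam ^ n) • PE E (((ContinuousLinearMap.adjoint T) ^ n) g)) e : ℂ) :=
  stmt_12_general T T' E lam h1 h2 g e he
end

section
/- Let X be a countable set, φ : X → X a self-map and w : X → ℂ, and suppose that the weighted composition operator C_{φ,w} is a bounded, left-invertible operator on ℓ²(X). Then its Cauchy dual C_{φ,w}' := C_{φ,w}(C_{φ,w}* C_{φ,w})⁻¹ is again a weighted composition operator with the same symbol φ and with weight w' : X → ℂ given by w'(x) := w(x) / (Σ_{y ∈ φ⁻¹(φ(x))} |w(y)|²); that is, C_{φ,w}' f = w'·(f∘φ) for every f ∈ ℓ²(X). -/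
/-! The operator `C* C` is diagonal in the standard basis: pairing with `e_y` gives
`(C* C g)(y) = ⟪C e_y, C g⟫ = N(y) g(y)` with `N(y) = ∑_{φ x = y} |w x|²`. A right inverse of
`C* C` therefore divides by `N`, which cannot vanish because `C* C` is onto, and composing it
with `C` gives the weighted composition operator with weight `w / (N ∘ φ)`. -/

open ContinuousLinearMap InnerProductSpace

section WeightedComposition

variable {𝕜 : Type*} [RCLike 𝕜] {X Y : Type*} {φ : X → Y} {w : X → 𝕜}
  {C : lp (fun _ : Y => 𝕜) 2 →L[𝕜] lp (fun _ : X => 𝕜) 2}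

lemma weightedComp_single_one_apply [DecidableEq Y] (hC : ∀ f x, C f x = w x * f (φ x))
    (y : Y) (x : X) : C (lp.single 2 y 1) x = {x | φ x = y}.indicator w x := by
  by_cases hx : φ x = y <;> simp [hC, hx]

lemma adjoint_weightedComp_apply (hC : ∀ f x, C f x = w x * f (φ x))
    (g : lp (fun _ : Y => 𝕜) 2) (y : Y) :
    adjoint C (C g) y = ((∑' x : {x // φ x = y}, ‖w x.1‖ ^ 2 : ℝ) : 𝕜) * g y := by
  classical
  have hterm : ∀ x, ⟪C (lp.single 2 y 1) x, C g x⟫_𝕜 =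
      {x | φ x = y}.indicator (fun x => ((‖w x‖ ^ 2 : ℝ) : 𝕜) * g y) x := by
    intro x
    by_cases hx : φ x = y
    · simp only [weightedComp_single_one_apply hC, hC, hx, Set.mem_ofPred_eq,
        Set.indicator_of_mem, RCLike.inner_apply]
      rw [mul_right_comm, RCLike.mul_conj, RCLike.ofReal_pow]
    · simp [weightedComp_single_one_apply hC, hx]
  calc adjoint C (C g) y = ⟪lp.single 2 y 1, adjoint C (C g)⟫_𝕜 := by
        simp [lp.inner_single_left]
    _ = ∑' x, ⟪C (lp.single 2 y 1) x, C g x⟫_𝕜 := by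
        rw [adjoint_inner_right, lp.inner_eq_tsum]
    _ = ∑' x : {x // φ x = y}, ((‖w x.1‖ ^ 2 : ℝ) : 𝕜) * g y := by
        rw [tsum_congr hterm, ← tsum_subtype]; rfl
    _ = _ := by rw [tsum_mul_right, RCLike.ofReal_tsum]

lemma apply_eq_div_of_adjoint_weightedComp_rightInverse (hC : ∀ f x, C f x = w x * f (φ x))
    {W : lp (fun _ : Y => 𝕜) 2 →L[𝕜] lp (fun _ : Y => 𝕜) 2}
    (hW : ((adjoint C).comp C).comp W = ContinuousLinearMap.id 𝕜 _)
    (f : lp (fun _ : Y => 𝕜) 2) (y : Y) :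
    W f y = f y / ((∑' x : {x // φ x = y}, ‖w x.1‖ ^ 2 : ℝ) : 𝕜) := by
  classical
  have hfactor : ∀ g : lp (fun _ : Y => 𝕜) 2,
      g y = ((∑' x : {x // φ x = y}, ‖w x.1‖ ^ 2 : ℝ) : 𝕜) * W g y := fun g => by
    rw [← adjoint_weightedComp_apply hC, ← comp_apply, ← comp_apply, hW, id_apply]
  have hne : ((∑' x : {x // φ x = y}, ‖w x.1‖ ^ 2 : ℝ) : 𝕜) ≠ 0 := by
    intro h
    simpa [h] using hfactor (lp.single 2 y 1)
  rw [eq_div_iff hne, mul_comm, ← hfactor]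

end WeightedComposition

theorem stmt_18_general {X : Type*} (φ : X → X) (w : X → ℂ)
    (Cw Cw' W : lp (fun _ : X => ℂ) 2 →L[ℂ] lp (fun _ : X => ℂ) 2)
    (hCw : ∀ (f : lp (fun _ : X => ℂ) 2) (x : X), Cw f x = w x * f (φ x))
    (hW2 : ((ContinuousLinearMap.adjoint Cw).comp Cw).comp W =
      ContinuousLinearMap.id ℂ _)
    (hCw' : Cw' = Cw.comp W) :
    ∀ (f : lp (fun _ : X => ℂ) 2) (x : X),
      Cw' f x =
        (w x / ((∑' y : {y : X // φ y = φ x}, ‖w y.1‖ ^ 2 : ℝ) : ℂ)) * f (φ x) := by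
  intro f x
  rw [hCw', comp_apply, hCw, apply_eq_div_of_adjoint_weightedComp_rightInverse hCw hW2,
    mul_div_assoc', div_mul_eq_mul_div]
  -- the two sides differ only in the coercion `ℝ → ℂ`: `RCLike.ofReal` versus `Complex.ofReal`
  rfl

theorem stmt_18 {X : Type*} [Countable X] (φ : X → X) (w : X → ℂ)
    (Cw Cw' W : lp (fun _ : X => ℂ) 2 →L[ℂ] lp (fun _ : X => ℂ) 2)
    (hCw : ∀ (f : lp (fun _ : X => ℂ) 2) (x : X), Cw f x = w x * f (φ x))
    (hleft : ∃ L : lp (fun _ : X => ℂ) 2 →L[ℂ] lp (fun _ : X => ℂ) 2,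
      L.comp Cw = ContinuousLinearMap.id ℂ _)
    (hW1 : W.comp ((ContinuousLinearMap.adjoint Cw).comp Cw) =
      ContinuousLinearMap.id ℂ _)
    (hW2 : ((ContinuousLinearMap.adjoint Cw).comp Cw).comp W =
      ContinuousLinearMap.id ℂ _)
    (hCw' : Cw' = Cw.comp W) :
    ∀ (f : lp (fun _ : X => ℂ) 2) (x : X),
      Cw' f x =
        (w x / ((∑' y : {y : X // φ y = φ x}, ‖w y.1‖ ^ 2 : ℝ) : ℂ)) * f (φ x) :=
  stmt_18_general φ w Cw Cw' W hCw hW2 hCw'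
end
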